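/- arXiv:1703.00636 — 2 statements merged into one kernel-verified Lean document; each statement's English description precedes it below -/
import Mathlib

section
/- The images under mk of the following 28 monomials form a ℂ-basis of R₁₀ = mk(S₁₀): x₁ⁱx₂^{4-i}x₃³ for 0 ≤ i ≤ 4 (five monomials), x₁ⁱx₂^{6-i}x₃² for 0 ≤ i ≤ 6 (seven monomials), x₁ⁱx₂^{8-i}x₃ for 0 ≤ i ≤ 8 (nine monomials), and x₁ⁱx₂^{10-i} for 2 ≤ i ≤ 8 (seven monomials). -/
/-! Each partial derivative of `f₀` is a nonzero multiple of a pure power, so `J` is the monomial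
ideal `(x₁⁹, x₂⁹, x₃⁴, x₄)`. A polynomial lies in a monomial ideal iff every monomial of its
support is divisible by a generator; hence the monomials divisible by no generator stay linearly
independent in the quotient, while all other monomials vanish there, so `R_k` is spanned by the
images of the non-divisible monomials of weight `k`. For `k = 10` these are the monomials
`x₁ᵃx₂ᵇx₃ᶜ` with `a, b ≤ 8`, `c ≤ 3` and `a + b + 2c = 10`: exactly the 28 listed ones. -/

open MvPolynomial

noncomputable section

/-- The polynomial ring `ℂ[x₁,x₂,x₃,x₄]`. -/
abbrev S : Type := MvPolynomial (Fin 4) ℂ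

/-- The weights `(1,1,2,5)`. -/
def w : Fin 4 → ℕ := ![1, 1, 2, 5]

/-- The Fermat-type polynomial `f₀ = x₁¹⁰ + x₂¹⁰ + x₃⁵ + x₄²`. -/
def f₀ : S := X 0 ^ 10 + X 1 ^ 10 + X 2 ^ 5 + X 3 ^ 2

/-- The Jacobian ideal of `f₀`, generated by its four partial derivatives. -/
def J : Ideal S :=
  Ideal.span {pderiv 0 f₀, pderiv 1 f₀, pderiv 2 f₀, pderiv 3 f₀}

/-- The Jacobian ring `R = S ⧸ J`. -/
abbrev R : Type := S ⧸ J

/-- The quotient map `mk : S → R` as a `ℂ`-linear map. -/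
def mkL : S →ₗ[ℂ] R := (Ideal.Quotient.mkₐ ℂ J).toLinearMap

/-- `S_k`, the space of weighted homogeneous polynomials of weighted degree `k`. -/
def Sk (k : ℕ) : Submodule ℂ S := weightedHomogeneousSubmodule ℂ w k

/-- `R_k = mk(S_k)`, the image of `S_k` in the Jacobian ring. -/
def Rk (k : ℕ) : Submodule ℂ R := (Sk k).map mkL

/-- The 28 monomials of weighted degree 10:
`x₁ⁱx₂^{4-i}x₃³` for `0 ≤ i ≤ 4`, `x₁ⁱx₂^{6-i}x₃²` for `0 ≤ i ≤ 6`,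
`x₁ⁱx₂^{8-i}x₃` for `0 ≤ i ≤ 8`, and `x₁ⁱx₂^{10-i}` for `2 ≤ i ≤ 8`. -/
def fam10 : Fin 28 → S := fun n =>
  if (n : ℕ) < 5 then X 0 ^ (n : ℕ) * X 1 ^ (4 - (n : ℕ)) * X 2 ^ 3
  else if (n : ℕ) < 12 then X 0 ^ ((n : ℕ) - 5) * X 1 ^ (6 - ((n : ℕ) - 5)) * X 2 ^ 2
  else if (n : ℕ) < 21 then X 0 ^ ((n : ℕ) - 12) * X 1 ^ (8 - ((n : ℕ) - 12)) * X 2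
  else X 0 ^ ((n : ℕ) - 19) * X 1 ^ (10 - ((n : ℕ) - 19))

namespace MvPolynomial

variable {σ K : Type*} [CommRing K] {E : Set (σ →₀ ℕ)} {I : Ideal (MvPolynomial σ K)}

theorem monomial_equivFunOnFinite_symm {R : Type*} [Fintype σ] [CommSemiring R] (v : σ → ℕ) :
    monomial (Finsupp.equivFunOnFinite.symm v) (1 : R) = ∏ i, X i ^ v i := by
  rw [monomial_eq, C_1, one_mul, Finsupp.prod_fintype _ _ (fun _ => pow_zero _)]
  simp only [Finsupp.coe_equivFunOnFinite_symm]

theorem mk_monomial_eq_zero_of_le (hI : I = Ideal.span ((monomial · (1 : K)) '' E))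
    {e u : σ →₀ ℕ} (he : e ∈ E) (hle : e ≤ u) : Ideal.Quotient.mk I (monomial u 1) = 0 := by
  have hfactor : monomial u (1 : K) = monomial (u - e) 1 * monomial e 1 := by
    rw [monomial_mul, tsub_add_cancel_of_le hle, one_mul]
  rw [Ideal.Quotient.eq_zero_iff_mem, hfactor, hI]
  exact Ideal.mul_mem_left _ _ (Ideal.subset_span ⟨e, he, rfl⟩)

theorem linearIndependent_mk_monomial (hI : I = Ideal.span ((monomial · (1 : K)) '' E))
    {ι : Type*} {d : ι → σ →₀ ℕ} (hd : Function.Injective d)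
    (hstd : ∀ i, ∀ e ∈ E, ¬ e ≤ d i) :
    LinearIndependent K (fun i => Ideal.Quotient.mk I (monomial (d i) (1 : K))) := by
  have hmono : LinearIndependent K (fun i => monomial (d i) (1 : K)) :=
    (basisMonomials σ K).linearIndependent.comp d hd
  refine hmono.map (f := (Ideal.Quotient.mkₐ K I).toLinearMap) ?_
  rw [Submodule.disjoint_def]
  intro p hspan hker
  have hsupp : ↑p.support ⊆ Set.range d := by
    have hrange : Set.range (fun i => monomial (d i) (1 : K)) = (monomial · 1) '' Set.range d :=
      Set.range_comp (monomial · (1 : K)) d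
    rw [hrange, ← restrictSupport_eq_span] at hspan
    exact (mem_restrictSupport_iff K).mp hspan
  rw [LinearMap.mem_ker, AlgHom.toLinearMap_apply, Ideal.Quotient.mkₐ_eq_mk,
    Ideal.Quotient.eq_zero_iff_mem, hI, mem_ideal_span_monomial_image] at hker
  rw [← support_eq_empty, Finset.eq_empty_iff_forall_notMem]
  intro u hu
  obtain ⟨i, rfl⟩ := hsupp hu
  obtain ⟨e, he, hle⟩ := hker _ hu
  exact hstd i e he hle

theorem map_weightedHomogeneousSubmodule_eq_span (hI : I = Ideal.span ((monomial · (1 : K)) '' E))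
    {M : Type*} [AddCommMonoid M] {w : σ → M} {m : M} {ι : Type*} {d : ι → σ →₀ ℕ}
    (hdeg : ∀ i, Finsupp.weight w (d i) = m)
    (hstd : ∀ u, Finsupp.weight w u = m → (∀ e ∈ E, ¬ e ≤ u) → u ∈ Set.range d) :
    (weightedHomogeneousSubmodule K w m).map (Ideal.Quotient.mkₐ K I).toLinearMap =
      Submodule.span K (Set.range fun i => Ideal.Quotient.mk I (monomial (d i) (1 : K))) := by
  rw [weightedHomogeneousSubmodule_eq_finsupp_supported]
  change (restrictSupport K _).map _ = _
  rw [restrictSupport_eq_span, Submodule.map_span, Set.image_image]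
  apply le_antisymm
  · rw [Submodule.span_le]
    rintro _ ⟨u, hu, rfl⟩
    by_cases hu_std : ∀ e ∈ E, ¬ e ≤ u
    · obtain ⟨i, rfl⟩ := hstd u hu hu_std
      exact Submodule.subset_span ⟨i, rfl⟩
    · push Not at hu_std
      obtain ⟨e, he, hle⟩ := hu_std
      show Ideal.Quotient.mk I (monomial u 1) ∈ _
      rw [mk_monomial_eq_zero_of_le hI he hle]
      exact Submodule.zero_mem _
  · rw [Submodule.span_le]
    rintro _ ⟨i, rfl⟩
    exact Submodule.subset_span ⟨d i, hdeg i, rfl⟩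

end MvPolynomial

def jacobianExponents : Set (Fin 4 →₀ ℕ) :=
  {Finsupp.single 0 9, Finsupp.single 1 9, Finsupp.single 2 4, Finsupp.single 3 1}

theorem J_eq_span_monomial : J = Ideal.span ((monomial · (1 : ℂ)) '' jacobianExponents) := by
  have h0 : pderiv 0 f₀ = C 10 * X 0 ^ 9 := by simp [f₀, ← map_ofNat C]
  have h1 : pderiv 1 f₀ = C 10 * X 1 ^ 9 := by simp [f₀, ← map_ofNat C]
  have h2 : pderiv 2 f₀ = C 5 * X 2 ^ 4 := by simp [f₀, ← map_ofNat C]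
  have h3 : pderiv 3 f₀ = C 2 * X 3 ^ 1 := by simp [f₀, ← map_ofNat C]
  have hspan (c : ℂ) (hc : c ≠ 0) (x : S) : Ideal.span {C c * x} = Ideal.span {x} :=
    Ideal.span_singleton_mul_left_unit ((isUnit_iff_ne_zero.mpr hc).map C) x
  simp only [J, jacobianExponents, h0, h1, h2, h3, Set.image_insert_eq, Set.image_singleton,
    ← X_pow_eq_monomial]
  simp only [Ideal.span_insert]
  rw [hspan 10 (by norm_num), hspan 10 (by norm_num), hspan 5 (by norm_num), hspan 2 (by norm_num)]

theorem weight_w_apply (u : Fin 4 →₀ ℕ) :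
    Finsupp.weight w u = u 0 + u 1 + 2 * u 2 + 5 * u 3 := by
  simp [Finsupp.weight_apply, Finsupp.sum_fintype, Fin.sum_univ_four, w, mul_comm]

theorem forall_not_le_jacobianExponents_iff (u : Fin 4 →₀ ℕ) :
    (∀ e ∈ jacobianExponents, ¬ e ≤ u) ↔ u 0 < 9 ∧ u 1 < 9 ∧ u 2 < 4 ∧ u 3 = 0 := by
  simp [jacobianExponents, Finsupp.single_le_iff]

def fam10Vec (n : Fin 28) : Fin 4 → ℕ :=
  if (n : ℕ) < 5 then ![n, 4 - n, 3, 0]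
  else if (n : ℕ) < 12 then ![n - 5, 6 - (n - 5), 2, 0]
  else if (n : ℕ) < 21 then ![n - 12, 8 - (n - 12), 1, 0]
  else ![n - 19, 10 - (n - 19), 0, 0]

def fam10Exp (n : Fin 28) : Fin 4 →₀ ℕ := Finsupp.equivFunOnFinite.symm (fam10Vec n)

theorem fam10_eq_monomial (n : Fin 28) : fam10 n = monomial (fam10Exp n) 1 := by
  rw [fam10Exp, monomial_equivFunOnFinite_symm, Fin.prod_univ_four]
  unfold fam10 fam10Vec
  split_ifs <;> simp

theorem fam10Exp_injective : Function.Injective fam10Exp := by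
  have hvec : Function.Injective fam10Vec := by
    intro m n h; revert m n h; decide
  exact Finsupp.equivFunOnFinite.symm.injective.comp hvec

theorem forall_not_le_fam10Exp (n : Fin 28) : ∀ e ∈ jacobianExponents, ¬ e ≤ fam10Exp n := by
  have hvec : ∀ n, fam10Vec n 0 < 9 ∧ fam10Vec n 1 < 9 ∧ fam10Vec n 2 < 4 ∧ fam10Vec n 3 = 0 := by
    decide
  rw [forall_not_le_jacobianExponents_iff]
  exact hvec n

theorem weight_fam10Exp (n : Fin 28) : Finsupp.weight w (fam10Exp n) = 10 := by
  have hvec : ∀ n, fam10Vec n 0 + fam10Vec n 1 + 2 * fam10Vec n 2 + 5 * fam10Vec n 3 = 10 := by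
    decide
  rw [weight_w_apply]
  exact hvec n

theorem mem_range_fam10Exp (u : Fin 4 →₀ ℕ) (hw : Finsupp.weight w u = 10)
    (hu : ∀ e ∈ jacobianExponents, ¬ e ≤ u) : u ∈ Set.range fam10Exp := by
  have hvec : ∀ a : Fin 9, ∀ b : Fin 9, ∀ c : Fin 4, (a : ℕ) + b + 2 * c = 10 →
      ∃ n, fam10Vec n = ![(a : ℕ), b, c, 0] := by
    decide
  rw [weight_w_apply] at hw
  obtain ⟨h0, h1, h2, h3⟩ := (forall_not_le_jacobianExponents_iff u).mp hu
  obtain ⟨n, hn⟩ := hvec ⟨u 0, h0⟩ ⟨u 1, h1⟩ ⟨u 2, h2⟩ (by simp only; omega)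
  refine ⟨n, Finsupp.ext fun i => ?_⟩
  fin_cases i <;> simp [fam10Exp, hn, h3]

/-- The images under `mk` of the 28 monomials of `fam10` form a `ℂ`-basis of `R₁₀`. -/
theorem basis_R10 :
    LinearIndependent ℂ (fun n : Fin 28 => (Ideal.Quotient.mk J (fam10 n) : R)) ∧
      Submodule.span ℂ
        (Set.range fun n : Fin 28 => (Ideal.Quotient.mk J (fam10 n) : R)) = Rk 10 := by
  simp only [fam10_eq_monomial]
  exact ⟨linearIndependent_mk_monomial J_eq_span_monomial fam10Exp_injective forall_not_le_fam10Exp,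
    (map_weightedHomogeneousSubmodule_eq_span J_eq_span_monomial weight_fam10Exp
      mem_range_fam10Exp).symm⟩
end
end

section
/- The top graded pieces of the Jacobian ring of f₀ have the expected dimensions: the ℂ-vector space R₂₁ = mk(S₂₁) has finrank 2, and the ℂ-vector space R₂₂ = mk(S₂₂) has finrank 1 (these compute h^{0,2} = 2 and the one-dimensional socle R₂₂ ≅ ℂ). -/
open MvPolynomial

noncomputable section

/-!
Each partial derivative of `f₀ = ∑ xᵢ ^ nᵢ` is a nonzero multiple of `xᵢ ^ (nᵢ - 1)`, so `J` is the
monomial ideal `(x₁⁹, x₂⁹, x₃⁴, x₄)`. The monomials outside a monomial ideal map to a basis of the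
quotient, so `R_k` has as a basis the images of the monomials `x₁ᵃx₂ᵇx₃ᶜ` with `a, b ≤ 8`, `c ≤ 3` and
`a + b + 2c = k`: these are `x₁⁷x₂⁸x₃³, x₁⁸x₂⁷x₃³` for `k = 21` and `x₁⁸x₂⁸x₃³` for `k = 22`.
-/

section MonomialIdeal

variable {σ R K : Type*} [CommSemiring R] [Field K]

variable (R) in
def monomialIdeal (E : Set (σ →₀ ℕ)) : Ideal (MvPolynomial σ R) :=
  Ideal.span ((fun s => monomial s (1 : R)) '' E)

def standardExponents (E : Set (σ →₀ ℕ)) : Set (σ →₀ ℕ) := {d | ∀ e ∈ E, ¬ e ≤ d}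

variable {E : Set (σ →₀ ℕ)}

theorem mem_standardExponents_range_single {n : σ → ℕ} {d : σ →₀ ℕ} :
    d ∈ standardExponents (Set.range fun i => Finsupp.single i (n i)) ↔ ∀ i, d i < n i := by
  simp [standardExponents, Finsupp.single_le_iff]

theorem monomial_one_mem_monomialIdeal {d : σ →₀ ℕ} (hd : d ∉ standardExponents E) :
    monomial d (1 : R) ∈ monomialIdeal R E := by
  obtain ⟨e, he, hed⟩ : ∃ e ∈ E, e ≤ d := by simpa [standardExponents] using hd
  exact mem_ideal_span_monomial_image.2 fun x hx =>
    ⟨e, he, Finset.mem_singleton.1 (support_monomial_subset hx) ▸ hed⟩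

theorem eq_zero_of_mem_monomialIdeal {p : MvPolynomial σ R} (hp : p ∈ monomialIdeal R E)
    (hsupp : ↑p.support ⊆ standardExponents E) : p = 0 := by
  rw [monomialIdeal, mem_ideal_span_monomial_image] at hp
  by_contra hne
  obtain ⟨d, hd⟩ := Finset.nonempty_of_ne_empty (mt support_eq_empty.1 hne)
  obtain ⟨e, he, hed⟩ := hp d hd
  exact hsupp hd e he hed

theorem linearIndepOn_mk_monomial_standardExponents :
    LinearIndepOn K (fun d => Ideal.Quotient.mkₐ K (monomialIdeal K E) (monomial d 1))
      (standardExponents E) := by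
  refine ((basisMonomials σ K).linearIndependent.linearIndepOn _).map_injOn
    (Ideal.Quotient.mkₐ K _).toLinearMap (LinearMap.injOn_of_disjoint_ker le_rfl ?_)
  rw [Submodule.disjoint_def]
  intro p hspan hker
  rw [Module.Basis.mem_span_image] at hspan
  exact eq_zero_of_mem_monomialIdeal (Ideal.Quotient.eq_zero_iff_mem.1 hker) hspan

section Weighted

variable {M : Type*} [AddCommMonoid M] (w : σ → M) (k : M)

theorem weightedHomogeneousSubmodule_eq_span_monomial :
    weightedHomogeneousSubmodule K w k =
      Submodule.span K ((fun d => monomial d (1 : K)) '' {d | Finsupp.weight w d = k}) := by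
  ext p
  rw [mem_weightedHomogeneousSubmodule, ← coe_basisMonomials, Module.Basis.mem_span_image]
  exact ⟨fun hp d hd => hp (mem_support_iff.1 hd), fun hp d hd => hp (mem_support_iff.2 hd)⟩

theorem map_weightedHomogeneousSubmodule_mkₐ_monomialIdeal :
    (weightedHomogeneousSubmodule K w k).map
        (Ideal.Quotient.mkₐ K (monomialIdeal K E)).toLinearMap =
      Submodule.span K ((fun d => Ideal.Quotient.mkₐ K (monomialIdeal K E) (monomial d 1)) ''
        {d | Finsupp.weight w d = k ∧ d ∈ standardExponents E}) := by
  rw [weightedHomogeneousSubmodule_eq_span_monomial, Submodule.map_span, Set.image_image]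
  refine le_antisymm (Submodule.span_le.2 ?_)
    (Submodule.span_mono (Set.image_mono fun d hd => hd.1))
  rintro _ ⟨d, hd, rfl⟩
  by_cases hstd : d ∈ standardExponents E
  · exact Submodule.subset_span ⟨d, ⟨hd, hstd⟩, rfl⟩
  · simp [Ideal.Quotient.eq_zero_iff_mem.2 (monomial_one_mem_monomialIdeal (R := K) hstd)]

theorem finrank_map_weightedHomogeneousSubmodule_mkₐ {I : Ideal (MvPolynomial σ K)}
    (hI : I = monomialIdeal K E) (T : Finset (σ →₀ ℕ))
    (hT : ↑T = {d | Finsupp.weight w d = k ∧ d ∈ standardExponents E}) :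
    Module.finrank K
        ((weightedHomogeneousSubmodule K w k).map (Ideal.Quotient.mkₐ K I).toLinearMap) =
      T.card := by
  subst hI
  have hT_indep : LinearIndepOn K _ (T : Set (σ →₀ ℕ)) :=
    (linearIndepOn_mk_monomial_standardExponents (E := E)).mono (hT ▸ fun d hd => hd.2)
  rw [map_weightedHomogeneousSubmodule_mkₐ_monomialIdeal, ← hT, ← Fintype.card_coe T]
  exact Set.image_eq_range _ (T : Set (σ →₀ ℕ)) ▸ finrank_span_eq_card hT_indep

end Weighted

theorem pderiv_sum_X_pow [Fintype σ] [DecidableEq σ] (n : σ → ℕ) (i : σ) :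
    pderiv i (∑ j, X j ^ n j : MvPolynomial σ R) = C (n i : R) * X i ^ (n i - 1) := by
  simp [pderiv_X, Pi.single_apply]

theorem span_range_pderiv_sum_X_pow [Fintype σ] [CharZero K] (n : σ → ℕ) (hn : ∀ i, n i ≠ 0) :
    Ideal.span (Set.range fun i => pderiv i (∑ j, X j ^ n j : MvPolynomial σ K)) =
      monomialIdeal K (Set.range fun i => Finsupp.single i (n i - 1)) := by
  classical
  simp_rw [monomialIdeal, ← Set.range_comp, Function.comp_def, ← X_pow_eq_monomial,
    pderiv_sum_X_pow]
  refine le_antisymm (Ideal.span_le.2 ?_) (Ideal.span_le.2 ?_) <;> rintro _ ⟨i, rfl⟩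
  · exact Ideal.mul_mem_left _ _ (Ideal.subset_span ⟨i, rfl⟩)
  · have hunit : IsUnit (C (n i : K) : MvPolynomial σ K) :=
      (Nat.cast_ne_zero.2 (hn i)).isUnit.map C
    exact (Ideal.unit_mul_mem_iff_mem _ hunit).1 (Ideal.subset_span ⟨i, rfl⟩)

end MonomialIdeal

theorem f₀_eq_sum_X_pow : f₀ = ∑ i, X i ^ (![10, 10, 5, 2] i) := by
  simp [f₀, Fin.sum_univ_four]

theorem J_eq_monomialIdeal :
    J = monomialIdeal ℂ (Set.range fun i : Fin 4 => Finsupp.single i (![9, 9, 4, 1] i)) := by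
  have hJ : J = Ideal.span (Set.range fun i => pderiv i f₀) := by
    rw [J]
    congr 1
    ext
    simp [Fin.exists_fin_succ, eq_comm]
  rw [hJ, f₀_eq_sum_X_pow, span_range_pderiv_sum_X_pow _ (by decide)]
  congr
  ext i
  fin_cases i <;> rfl

theorem weight_w (d : Fin 4 →₀ ℕ) : Finsupp.weight w d = d 0 + d 1 + 2 * d 2 + 5 * d 3 := by
  simp [w, Finsupp.weight_apply, Finsupp.sum_fintype, Fin.sum_univ_four, mul_comm]

theorem finrank_Rk (k : ℕ) (T : Finset (Fin 4 →₀ ℕ))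
    (hT : ∀ d, d ∈ T ↔
      d 0 + d 1 + 2 * d 2 + 5 * d 3 = k ∧ d 0 < 9 ∧ d 1 < 9 ∧ d 2 < 4 ∧ d 3 = 0) :
    Module.finrank ℂ (Rk k) = T.card := by
  refine finrank_map_weightedHomogeneousSubmodule_mkₐ w k J_eq_monomialIdeal T ?_
  ext d
  simp [hT, weight_w, mem_standardExponents_range_single, Fin.forall_fin_succ]

/-- The top graded pieces of the Jacobian ring of `f₀`:
`R₂₁` has dimension 2 (computing `h^{0,2} = 2`) and `R₂₂`, the socle, has dimension 1. -/
theorem finrank_R21_R22 :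
    Module.finrank ℂ (Rk 21) = 2 ∧ Module.finrank ℂ (Rk 22) = 1 := by
  constructor
  · rw [finrank_Rk 21 {Finsupp.equivFunOnFinite.symm ![7, 8, 3, 0],
      Finsupp.equivFunOnFinite.symm ![8, 7, 3, 0]}, Finset.card_pair (by simp)]
    intro d
    simp [Finsupp.ext_iff, Fin.forall_fin_succ]
    omega
  · rw [finrank_Rk 22 {Finsupp.equivFunOnFinite.symm ![8, 8, 3, 0]}, Finset.card_singleton]
    intro d
    simp [Finsupp.ext_iff, Fin.forall_fin_succ]
    omega
end
end
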